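/- It holds the direct decomposition P_{k-2}(T; 𝕂) = skw∇P_{k-1}(T; ℝ^d) ⊕ (P_{k-2}(T; 𝕂) ∩ ker(x)), where ker(x) = {τ : τ(x)x = 0 for all x}. -/

import Mathlib

/-!
Let `E = ∑ xᵢ ∂ᵢ` be the Euler operator, which multiplies a homogeneous polynomial of degree `n`
by `n`. If `u ⬝ x = 0` then `(skw∇u) x = -(E + 1) u / 2`. For `u = T x` with
`T = (E + 2)⁻¹ (2τ)`, which is again antisymmetric, `(E + 1) u = ((E + 2) T) x = 2 τ x`, so
`ρ = τ - skw∇(-u)` satisfies `ρ x = 0`. Conversely, if `D = skw∇w` satisfies `D x = 0`, then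
differentiating `D x = 0` and using the cyclic identity `∂ₗDᵢⱼ + ∂ᵢDⱼₗ + ∂ⱼDₗᵢ = 0` gives
`E D = -2 D`, which forces `D = 0` because `E + 2` is injective; this is uniqueness.
-/

open MvPolynomial Matrix

theorem Matrix.mulVec_dotProduct_self_eq_zero {n R : Type*} [Fintype n] [CommRing R]
    [IsAddTorsionFree R] {A : Matrix n n R} (hA : Aᵀ = -A) (x : n → R) : A *ᵥ x ⬝ᵥ x = 0 := by
  rw [← self_eq_neg]
  calc A *ᵥ x ⬝ᵥ x = x ᵥ* A ⬝ᵥ x := by rw [dotProduct_comm, dotProduct_mulVec]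
    _ = Aᵀ *ᵥ x ⬝ᵥ x := by rw [← vecMul_transpose, transpose_transpose]
    _ = -(A *ᵥ x ⬝ᵥ x) := by rw [hA, neg_mulVec, neg_dotProduct]

namespace MvPolynomial

section CommSemiring

variable {σ R : Type*} [CommSemiring R]

theorem totalDegree_pderiv_le (i : σ) (p : MvPolynomial σ R) :
    (pderiv i p).totalDegree ≤ p.totalDegree - 1 := by
  refine Finset.sup_le fun m hm => ?_
  have hcoeff : coeff (m + Finsupp.single i 1) p ≠ 0 := fun h => by
    simp [coeff_pderiv, h] at hm
  have hle : (m + Finsupp.single i 1).degree ≤ p.totalDegree :=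
    le_totalDegree (mem_support_iff.mpr hcoeff)
  rw [map_add, Finsupp.degree_single] at hle
  exact Nat.le_sub_one_of_lt hle

theorem pderiv_sum_mul_X [Fintype σ] (f : σ → MvPolynomial σ R) (i : σ) :
    pderiv i (∑ l, f l * X l) = ∑ l, pderiv i (f l) * X l + f i := by
  classical
  simp only [map_sum, pderiv_mul, Finset.sum_add_distrib, pderiv_X, Pi.single_apply, mul_ite,
    mul_one, mul_zero, Finset.sum_ite_eq', Finset.mem_univ, if_true]

end CommSemiring

theorem pderiv_pderiv_comm {σ R : Type*} [CommRing R] (i j : σ) (p : MvPolynomial σ R) :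
    pderiv i (pderiv j p) = pderiv j (pderiv i p) := by
  have hcomm : ⁅pderiv i, pderiv j⁆ = (0 : Derivation R (MvPolynomial σ R) (MvPolynomial σ R)) :=
    derivation_ext fun k => by
      classical
      rw [Derivation.commutator_apply]
      simp [pderiv_X, Pi.single_apply, apply_ite]
  rw [← sub_eq_zero, ← Derivation.commutator_apply, hcomm, Derivation.zero_apply]

section Euler

variable {σ R : Type*} [Fintype σ] [CommSemiring R]

noncomputable def euler : Derivation R (MvPolynomial σ R) (MvPolynomial σ R) :=
  ∑ i : σ, (X i : MvPolynomial σ R) • pderiv i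

theorem euler_apply (p : MvPolynomial σ R) : euler p = ∑ i, X i * pderiv i p := by
  rw [euler, ← Derivation.coeFnAddMonoidHom_apply, map_sum, Finset.sum_apply]
  rfl

theorem euler_X (j : σ) : euler (X j : MvPolynomial σ R) = X j := by
  classical
  simp [euler_apply, pderiv_X, Pi.single_apply]

theorem coeff_euler (p : MvPolynomial σ R) (m : σ →₀ ℕ) :
    coeff m (euler p) = m.degree * coeff m p := by
  classical
  induction p using induction_on' with
  | monomial s a =>
    rw [euler_apply, (isHomogeneous_monomial a rfl).sum_X_mul_pderiv, coeff_smul, coeff_monomial,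
      nsmul_eq_mul]
    split_ifs with h
    · rw [h]
    · simp
  | add p q hp hq => rw [map_add, coeff_add, coeff_add, hp, hq, mul_add]

end Euler

section EulerShiftInv

variable {σ K : Type*} [Field K]

noncomputable def eulerShiftInv (c : K) (p : MvPolynomial σ K) : MvPolynomial σ K :=
  ∑ m ∈ p.support, monomial m (((m.degree : K) + c)⁻¹ * coeff m p)

theorem coeff_eulerShiftInv (c : K) (p : MvPolynomial σ K) (m : σ →₀ ℕ) :
    coeff m (eulerShiftInv c p) = ((m.degree : K) + c)⁻¹ * coeff m p := by
  classical
  rw [eulerShiftInv, coeff_sum]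
  simp_rw [coeff_monomial]
  rw [Finset.sum_ite_eq']
  split_ifs with h
  · rfl
  · rw [notMem_support_iff.mp h, mul_zero]

theorem eulerShiftInv_neg (c : K) (p : MvPolynomial σ K) :
    eulerShiftInv c (-p) = -eulerShiftInv c p := by
  ext m
  simp [coeff_eulerShiftInv]

theorem totalDegree_eulerShiftInv_le (c : K) (p : MvPolynomial σ K) :
    (eulerShiftInv c p).totalDegree ≤ p.totalDegree := by
  refine totalDegree_le_of_support_subset fun m hm => ?_
  rw [mem_support_iff, coeff_eulerShiftInv] at hm
  exact mem_support_iff.mpr (right_ne_zero_of_mul hm)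

variable [Fintype σ] {c : K}

theorem euler_eulerShiftInv_add_smul (hc : ∀ n : ℕ, (n : K) + c ≠ 0) (p : MvPolynomial σ K) :
    euler (eulerShiftInv c p) + c • eulerShiftInv c p = p := by
  ext m
  rw [coeff_add, coeff_euler, coeff_smul, coeff_eulerShiftInv, smul_eq_mul, ← add_mul, ← mul_assoc,
    mul_inv_cancel₀ (hc _), one_mul]

theorem eq_zero_of_euler_add_smul_eq_zero (hc : ∀ n : ℕ, (n : K) + c ≠ 0)
    {p : MvPolynomial σ K} (h : euler p + c • p = 0) : p = 0 := by
  ext m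
  have hm := congr(coeff m $h)
  rw [coeff_add, coeff_euler, coeff_smul, smul_eq_mul, ← add_mul, coeff_zero] at hm
  simpa [hc] using hm

end EulerShiftInv

section SkwGrad

variable {σ K : Type*} [Field K]

noncomputable def skwGrad (v : σ → MvPolynomial σ K) : Matrix σ σ (MvPolynomial σ K) :=
  Matrix.of fun i j => C (1 / 2 : K) * (pderiv i (v j) - pderiv j (v i))

@[simp]
theorem skwGrad_apply (v : σ → MvPolynomial σ K) (i j : σ) :
    skwGrad v i j = C (1 / 2 : K) * (pderiv i (v j) - pderiv j (v i)) :=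
  rfl

theorem skwGrad_apply_swap (v : σ → MvPolynomial σ K) (i j : σ) :
    skwGrad v j i = -skwGrad v i j := by
  simp only [skwGrad_apply]
  ring

theorem skwGrad_sub (v w : σ → MvPolynomial σ K) : skwGrad (v - w) = skwGrad v - skwGrad w := by
  ext i j : 1
  simp only [Matrix.sub_apply, skwGrad_apply, Pi.sub_apply, map_sub]
  ring

theorem skwGrad_neg (v : σ → MvPolynomial σ K) : skwGrad (-v) = -skwGrad v := by
  ext i j : 1
  simp only [Matrix.neg_apply, skwGrad_apply, Pi.neg_apply, map_neg]
  ring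

theorem totalDegree_skwGrad_le {v : σ → MvPolynomial σ K} {n : ℕ}
    (hv : ∀ j, (v j).totalDegree ≤ n) (i j : σ) : (skwGrad v i j).totalDegree ≤ n - 1 := by
  rw [skwGrad_apply, C_mul']
  refine (totalDegree_smul_le _ _).trans ((totalDegree_sub _ _).trans (max_le ?_ ?_)) <;>
    exact (totalDegree_pderiv_le _ _).trans (Nat.sub_le_sub_right (hv _) 1)

theorem pderiv_skwGrad_cyclic (v : σ → MvPolynomial σ K) (i j l : σ) :
    pderiv l (skwGrad v i j) + pderiv i (skwGrad v j l) + pderiv j (skwGrad v l i) = 0 := by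
  simp only [skwGrad_apply, pderiv_C_mul, map_sub]
  rw [pderiv_pderiv_comm l i, pderiv_pderiv_comm l j, pderiv_pderiv_comm i j]
  ring

variable [Fintype σ]

theorem skwGrad_mulVec_X {u : σ → MvPolynomial σ K} (hu : u ⬝ᵥ X = 0) (j : σ) :
    (skwGrad u *ᵥ X) j = -(C (1 / 2 : K) * (euler (u j) + u j)) := by
  have hdiff : ∑ i, pderiv j (u i) * X i = -u j := by
    have h := pderiv_sum_mul_X u j
    rw [show ∑ i, u i * X i = 0 from hu, map_zero] at h
    exact eq_neg_of_add_eq_zero_left h.symm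
  calc (skwGrad u *ᵥ X) j
      = C (1 / 2 : K) * (∑ i, pderiv j (u i) * X i - ∑ i, X i * pderiv i (u j)) := by
        rw [mul_sub, Finset.mul_sum, Finset.mul_sum, ← Finset.sum_sub_distrib]
        refine Finset.sum_congr rfl fun i _ => ?_
        simp only [skwGrad_apply]
        ring
    _ = -(C (1 / 2 : K) * (euler (u j) + u j)) := by
        rw [hdiff, ← euler_apply]
        ring

theorem euler_mulVec_X_add (T : Matrix σ σ (MvPolynomial σ K)) (j : σ) :
    euler ((T *ᵥ X) j) + (T *ᵥ X) j = ((T.map euler + (2 : K) • T) *ᵥ X) j := by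
  simp only [Matrix.mulVec, dotProduct, map_sum, ← Finset.sum_add_distrib]
  refine Finset.sum_congr rfl fun m _ => ?_
  rw [Derivation.leibniz, euler_X, Matrix.add_apply, Matrix.map_apply, Matrix.smul_apply, two_smul,
    smul_eq_mul, smul_eq_mul]
  ring

theorem skwGrad_eq_zero_of_mulVec_X_eq_zero [CharZero K] {w : σ → MvPolynomial σ K}
    (h : skwGrad w *ᵥ X = 0) : skwGrad w = 0 := by
  set D := skwGrad w
  have hskew (i j : σ) : D j i = -D i j := skwGrad_apply_swap w i j
  have hdiff (i j : σ) : ∑ l : σ, pderiv i (D j l) * X l = -D j i := by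
    have h' := pderiv_sum_mul_X (D j) i
    rw [show ∑ l, D j l * X l = 0 from congr_fun h j, map_zero] at h'
    exact eq_neg_of_add_eq_zero_left h'.symm
  refine Matrix.ext fun i j => ?_
  rw [Matrix.zero_apply]
  refine eq_zero_of_euler_add_smul_eq_zero (c := (2 : K)) (fun n => by norm_cast) ?_
  have hcyc (l : σ) : pderiv l (D i j) = pderiv j (D i l) - pderiv i (D j l) := by
    have h' := congr(pderiv j $(hskew i l))
    rw [map_neg] at h'
    linear_combination pderiv_skwGrad_cyclic w i j l - h'
  calc euler (D i j) + (2 : K) • D i j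
      = ∑ l, pderiv j (D i l) * X l - ∑ l, pderiv i (D j l) * X l + (2 : K) • D i j := by
        simp_rw [euler_apply, hcyc, mul_sub, Finset.sum_sub_distrib, mul_comm (X _)]
    _ = 0 := by
        rw [hdiff, hdiff, hskew i j, two_smul]
        ring

theorem skwGrad_eq_of_mulVec_X_eq [CharZero K] {v w : σ → MvPolynomial σ K}
    (h : skwGrad v *ᵥ X = skwGrad w *ᵥ X) : skwGrad v = skwGrad w := by
  rw [← sub_eq_zero, ← skwGrad_sub]
  exact skwGrad_eq_zero_of_mulVec_X_eq_zero (by rw [skwGrad_sub, sub_mulVec, h, sub_self])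

end SkwGrad

section SkwPotential

variable {σ K : Type*} [Fintype σ] [Field K]

noncomputable def skwPotential (τ : Matrix σ σ (MvPolynomial σ K)) : σ → MvPolynomial σ K :=
  -(((2 : K) • τ).map (eulerShiftInv 2) *ᵥ X)

theorem totalDegree_skwPotential_le {τ : Matrix σ σ (MvPolynomial σ K)} {n : ℕ}
    (hτ : ∀ i j, (τ i j).totalDegree ≤ n) (j : σ) : (skwPotential τ j).totalDegree ≤ n + 1 := by
  rw [skwPotential, Pi.neg_apply, totalDegree_neg]
  refine (totalDegree_finsetSum _ _).trans (Finset.sup_le fun m _ => ?_)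
  refine (totalDegree_mul _ _).trans (add_le_add ?_ (totalDegree_X m).le)
  exact (totalDegree_eulerShiftInv_le _ _).trans ((totalDegree_smul_le _ _).trans (hτ j m))

theorem skwGrad_skwPotential_mulVec_X [CharZero K] {τ : Matrix σ σ (MvPolynomial σ K)}
    (hτ : τᵀ = -τ) : skwGrad (skwPotential τ) *ᵥ X = τ *ᵥ X := by
  set T := ((2 : K) • τ).map (eulerShiftInv 2)
  have hT : Tᵀ = -T := by
    ext i j : 1
    have hji : τ j i = -τ i j := congr_fun₂ hτ i j
    simp only [T, transpose_apply, map_apply, Matrix.smul_apply, Matrix.neg_apply, hji, smul_neg,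
      eulerShiftInv_neg]
  have hET : T.map euler + (2 : K) • T = (2 : K) • τ := by
    ext i j : 1
    exact euler_eulerShiftInv_add_smul (fun n => by norm_cast) _
  funext j
  rw [skwPotential, skwGrad_neg, neg_mulVec, Pi.neg_apply,
    skwGrad_mulVec_X (mulVec_dotProduct_self_eq_zero hT X), euler_mulVec_X_add, hET, smul_mulVec,
    Pi.smul_apply, neg_neg, C_mul', smul_smul]
  norm_num

end SkwPotential
end MvPolynomial

/-- Direct decomposition
`P_{k-2}(T; 𝕂) = skw∇P_{k-1}(T; ℝ^d) ⊕ (P_{k-2}(T; 𝕂) ∩ ker(x))`: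
every antisymmetric-matrix-valued polynomial `τ` of degree `≤ k−2` is uniquely
the sum of `skw∇v` for a vector polynomial `v` of degree `≤ k−1` and an
antisymmetric-matrix-valued polynomial `ρ` of degree `≤ k−2` with `ρ(x)x = 0`. -/
theorem skwgrad_oplus_kerx_decomposition (d k : ℕ) (hk : 2 ≤ k)
    (τ : Matrix (Fin d) (Fin d) (MvPolynomial (Fin d) ℝ))
    (hdeg : ∀ i j, (τ i j).totalDegree ≤ k - 2)
    (hskw : ∀ i j, τ j i = - τ i j) :
    ∃! σρ : Matrix (Fin d) (Fin d) (MvPolynomial (Fin d) ℝ) ×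
            Matrix (Fin d) (Fin d) (MvPolynomial (Fin d) ℝ),
      (∃ v : Fin d → MvPolynomial (Fin d) ℝ, (∀ j, (v j).totalDegree ≤ k - 1) ∧
        ∀ i j, σρ.1 i j = C (1/2 : ℝ) * (pderiv i (v j) - pderiv j (v i))) ∧
      ((∀ i j, (σρ.2 i j).totalDegree ≤ k - 2) ∧ (∀ i j, σρ.2 j i = - σρ.2 i j) ∧
        (∀ j, ∑ i : Fin d, σρ.2 j i * X i = 0)) ∧
      τ = σρ.1 + σρ.2 := by
  set v := skwPotential τ
  have hv (j : Fin d) : (v j).totalDegree ≤ k - 1 :=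
    (totalDegree_skwPotential_le hdeg j).trans (by omega)
  have hvx : skwGrad v *ᵥ X = τ *ᵥ X :=
    skwGrad_skwPotential_mulVec_X (Matrix.ext fun i j => hskw i j)
  refine ⟨(skwGrad v, τ - skwGrad v), ⟨⟨v, hv, fun i j => rfl⟩, ⟨fun i j => ?_, fun i j => ?_,
    fun j => ?_⟩, (add_sub_cancel _ _).symm⟩, ?_⟩
  · exact (totalDegree_sub _ _).trans
      (max_le (hdeg i j) ((totalDegree_skwGrad_le hv i j).trans (by omega)))
  · dsimp only
    rw [Matrix.sub_apply, Matrix.sub_apply, hskw i j, skwGrad_apply_swap, neg_sub_neg, neg_sub]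
  · exact congr_fun (show (τ - skwGrad v) *ᵥ X = 0 by rw [sub_mulVec, hvx, sub_self]) j
  · rintro ⟨σ', ρ'⟩ ⟨⟨v', -, hσ'⟩, ⟨-, -, hρ'⟩, hτ⟩
    obtain rfl : σ' = skwGrad v' := Matrix.ext hσ'
    have hρ'x : ρ' *ᵥ X = 0 := funext hρ'
    have hσ : skwGrad v' = skwGrad v :=
      skwGrad_eq_of_mulVec_X_eq (by rw [hvx, hτ, add_mulVec, hρ'x, add_zero])
    rw [hσ] at hτ ⊢
    rw [hτ, add_sub_cancel_left]
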